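/- Let B ≥ 1, let (p,q) ∈ Rat_B, and let α, β ∈ ℝ. If (p,q) has the (α,β)-symmetry, then B(Bα − β) is an integer multiple of 2π; that is, N = B(Bα − β)/(2π) ∈ ℤ. -/
import Mathlib


open Polynomial Complex
open scoped Real

/-- `(p,q)` has the `(α,β)`-symmetry: `R(e^{iα} z) = M_β(R(z))` for `R = p/q`, where
`M_β` is the Möbius rotation by `β` about the `X`-axis. -/
def RotSymm (α β : ℝ) (p q : Polynomial ℂ) : Prop :=
  ∀ z : ℂ,
    p.eval (exp (I * α) * z) *
        (I * Real.sin (β / 2) * p.eval z + (Real.cos (β / 2) : ℂ) * q.eval z) =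
      q.eval (exp (I * α) * z) *
        ((Real.cos (β / 2) : ℂ) * p.eval z + I * Real.sin (β / 2) * q.eval z)

private lemma coeff_comp_C_mul_X (f : Polynomial ℂ) (c : ℂ) (n : ℕ) :
    (f.comp (C c * X)).coeff n = c ^ n * f.coeff n := by
  induction f using Polynomial.induction_on' with
  | add p q hp hq => simp [add_comp, hp, hq, mul_add]
  | monomial k a =>
      rw [monomial_comp, mul_pow, ← C_pow, ← mul_assoc, ← C_mul, coeff_C_mul, coeff_X_pow,
        coeff_monomial]
      by_cases h : n = k
      · subst h; rw [if_pos rfl, if_pos rfl]; ring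
      · rw [if_neg h, if_neg (fun hh => h hh.symm)]; ring

/-- If `(p,q) ∈ Rat_B` has the `(α,β)`-symmetry then `B(Bα - β)` is
an integer multiple of `2π`, i.e. `N = B(Bα - β)/(2π) ∈ ℤ`. -/
theorem symmetry_quantization (B : ℕ) (hB : 1 ≤ B) (α β : ℝ) (p q : Polynomial ℂ)
    (hpm : p.Monic) (hpd : p.natDegree = B) (hqm : q.Monic) (hqd : q.natDegree = B)
    (hnoroot : ∀ z : ℂ, ¬(p.eval z = 0 ∧ q.eval z = 0))
    (hsym : RotSymm α β p q) :
    ∃ N : ℤ, (B : ℝ) * ((B : ℝ) * α - β) = 2 * π * N := by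
  classical
  set c : ℂ := Complex.exp (I * α) with hc
  have hc0 : c ≠ 0 := Complex.exp_ne_zero _
  set co : ℂ := (Real.cos (β / 2) : ℂ) with hco
  set si : ℂ := I * (Real.sin (β / 2) : ℂ) with hsi
  have P1 : p.comp (C c * X) * (C si * p + C co * q)
      = q.comp (C c * X) * (C co * p + C si * q) := by
    apply Polynomial.funext
    intro z
    simp only [eval_mul, eval_add, eval_comp, eval_C, eval_X]
    exact hsym z
  set S : Polynomial ℂ := p + q with hS
  set D : Polynomial ℂ := p - q with hDdef
  set u : ℂ := co + si with hu
  set v : ℂ := co - si with hv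
  have hcs : (Real.cos (β/2) : ℂ)^2 + (Real.sin (β/2) : ℂ)^2 = 1 := by
    norm_cast
    exact Real.cos_sq_add_sin_sq (β/2)
  have huv : u * v = 1 := by
    rw [hu, hv, hco, hsi]
    linear_combination hcs - ((Real.sin (β/2) : ℂ))^2 * Complex.I_sq
  have hu0 : u ≠ 0 := left_ne_zero_of_mul_eq_one huv
  have hv0 : v ≠ 0 := right_ne_zero_of_mul_eq_one huv
  have hSD : ∀ z : ℂ, S.eval z = 0 → D.eval z = 0 → False := by
    intro z h1 h2
    have hp' : p.eval z = 0 := by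
      have : S.eval z + D.eval z = 2 * p.eval z := by
        rw [hS, hDdef]; simp [eval_add, eval_sub]; ring
      have h3 : (2 : ℂ) * p.eval z = 0 := by rw [← this, h1, h2, add_zero]
      simpa using h3
    have hq' : q.eval z = 0 := by
      have : S.eval z - D.eval z = 2 * q.eval z := by
        rw [hS, hDdef]; simp [eval_add, eval_sub]; ring
      have h3 : (2 : ℂ) * q.eval z = 0 := by rw [← this, h1, h2, sub_zero]
      simpa using h3
    exact hnoroot z ⟨hp', hq'⟩
  have hD0 : D ≠ 0 := by
    intro h
    have hpq : p = q := sub_eq_zero.mp (by rw [← hDdef]; exact h)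
    have hdeg : 0 < p.degree := natDegree_pos_iff_degree_pos.mp (by rw [hpd]; omega)
    obtain ⟨z, hz⟩ := Complex.exists_root hdeg
    exact hnoroot z ⟨hz, by rw [← hpq]; exact hz⟩
  have hSB : S.coeff B = 2 := by
    rw [hS, coeff_add, ← hpd, hpm.coeff_natDegree, hpd, ← hqd, hqm.coeff_natDegree]
    norm_num
  have hS0 : S ≠ 0 := by
    intro h
    rw [h] at hSB
    simp at hSB
  have hcop : IsCoprime S D := by
    apply EuclideanDomain.isCoprime_of_dvd
    · rintro ⟨h1, -⟩; exact hS0 h1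
    · intro g hgu hg0 hgS hgD
      have hdeg : 0 < g.degree :=
        degree_pos_of_ne_zero_of_nonunit hg0 (mem_nonunits_iff.mp hgu)
      obtain ⟨z, hz⟩ := Complex.exists_root hdeg
      obtain ⟨k1, hk1⟩ := hgS
      obtain ⟨k2, hk2⟩ := hgD
      refine hSD z ?_ ?_
      · rw [hk1, eval_mul, show eval z g = 0 from hz, zero_mul]
      · rw [hk2, eval_mul, show eval z g = 0 from hz, zero_mul]
  have key2 : C u * (S * (D.comp (C c * X))) = C v * (D * (S.comp (C c * X))) := by
    have e1 : S.comp (C c * X) = p.comp (C c * X) + q.comp (C c * X) := by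
      rw [hS, add_comp]
    have e2 : D.comp (C c * X) = p.comp (C c * X) - q.comp (C c * X) := by
      rw [hDdef, sub_comp]
    rw [e1, e2, hu, hv, hS, hDdef, C_add, C_sub]
    linear_combination (2 : Polynomial ℂ) * P1
  have hCu : IsCoprime D (C u) :=
    ⟨0, C u⁻¹, by rw [zero_mul, zero_add, ← C_mul, inv_mul_cancel₀ hu0, C_1]⟩
  have hCv : IsCoprime S (C v) :=
    ⟨0, C v⁻¹, by rw [zero_mul, zero_add, ← C_mul, inv_mul_cancel₀ hv0, C_1]⟩
  -- D divides its own dilation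
  have hdvdD : D ∣ D.comp (C c * X) := by
    have h2 : IsCoprime D (C u * S) := (hCu.mul_right hcop.symm)
    apply h2.dvd_of_dvd_mul_left
    refine ⟨C v * S.comp (C c * X), ?_⟩
    rw [← mul_assoc]
    rw [show C u * S * D.comp (C c * X) = C u * (S * D.comp (C c * X)) by ring, key2]
    ring
  have hdvdS : S ∣ S.comp (C c * X) := by
    have h2 : IsCoprime S (C v * D) := (hCv.mul_right hcop)
    apply h2.dvd_of_dvd_mul_left
    refine ⟨C u * D.comp (C c * X), ?_⟩
    rw [show C v * D * S.comp (C c * X) = C v * (D * S.comp (C c * X)) by ring, ← key2]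
    ring
  have hcompne : ∀ f : Polynomial ℂ, f ≠ 0 → f.comp (C c * X) ≠ 0 := by
    intro f hf h
    apply hf
    ext n
    have h2 := congrArg (fun g => Polynomial.coeff g n) h
    simp only [coeff_comp_C_mul_X, coeff_zero] at h2
    have := mul_eq_zero.mp h2
    simpa [pow_ne_zero n hc0] using this
  -- extract the scalar κ with D.comp (C c * X) = D * C κ
  obtain ⟨E, hE⟩ := hdvdD
  have hE0 : E ≠ 0 := by
    intro h
    exact hcompne D hD0 (by rw [hE, h, mul_zero])
  have hndE : E.natDegree = 0 := by
    have h1 : (D.comp (C c * X)).natDegree = D.natDegree := by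
      rw [natDegree_comp, natDegree_C_mul_X c hc0, mul_one]
    have h2 : (D.comp (C c * X)).natDegree = D.natDegree + E.natDegree := by
      rw [hE, natDegree_mul hD0 hE0]
    omega
  obtain ⟨κ, hκ⟩ := natDegree_eq_zero.mp hndE
  have hEκ : D.comp (C c * X) = D * C κ := by rw [hE, ← hκ]
  obtain ⟨F, hF⟩ := hdvdS
  have hF0 : F ≠ 0 := by
    intro h
    exact hcompne S hS0 (by rw [hF, h, mul_zero])
  have hndF : F.natDegree = 0 := by
    have h1 : (S.comp (C c * X)).natDegree = S.natDegree := by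
      rw [natDegree_comp, natDegree_C_mul_X c hc0, mul_one]
    have h2 : (S.comp (C c * X)).natDegree = S.natDegree + F.natDegree := by
      rw [hF, natDegree_mul hS0 hF0]
    omega
  obtain ⟨ρ, hρ⟩ := natDegree_eq_zero.mp hndF
  have hFρ : S.comp (C c * X) = S * C ρ := by rw [hF, ← hρ]
  -- coefficientwise eigen-relations
  have hDcoeff : ∀ n : ℕ, c ^ n * D.coeff n = κ * D.coeff n := by
    intro n
    calc c ^ n * D.coeff n = (D.comp (C c * X)).coeff n := (coeff_comp_C_mul_X D c n).symm
      _ = (D * C κ).coeff n := by rw [hEκ]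
      _ = κ * D.coeff n := by rw [coeff_mul_C]; ring
  have hScoeff : ∀ n : ℕ, c ^ n * S.coeff n = ρ * S.coeff n := by
    intro n
    calc c ^ n * S.coeff n = (S.comp (C c * X)).coeff n := (coeff_comp_C_mul_X S c n).symm
      _ = (S * C ρ).coeff n := by rw [hFρ]
      _ = ρ * S.coeff n := by rw [coeff_mul_C]; ring
  have hDtop : D.coeff D.natDegree ≠ 0 := by
    have h := Polynomial.leadingCoeff_ne_zero.mpr hD0
    rwa [Polynomial.leadingCoeff] at h
  have hκval : c ^ D.natDegree = κ := mul_right_cancel₀ hDtop (hDcoeff D.natDegree)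
  have hρval : c ^ B = ρ := by
    have h1 := hScoeff B
    have h2 : S.coeff B ≠ 0 := by rw [hSB]; norm_num
    exact mul_right_cancel₀ h2 h1
  -- the scalar equation u κ = v ρ
  have keyscalar : u * κ = v * ρ := by
    have h1 : C u * (S * (D * C κ)) = C v * (D * (S * C ρ)) := by
      rw [← hEκ, ← hFρ]; exact key2
    have h2 : C (u * κ) * (S * D) = C (v * ρ) * (S * D) := by
      rw [C_mul, C_mul]; linear_combination h1
    have h3 := mul_right_cancel₀ (mul_ne_zero hS0 hD0) h2
    exact C_inj.mp h3
  -- exponential bookkeeping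
  have hcpow : ∀ n : ℕ, c ^ n = Complex.exp (I * (n * α)) := by
    intro n
    rw [hc, ← Complex.exp_nat_mul]
    congr 1
    ring
  have huexp : u = Complex.exp ((β / 2 : ℝ) * I) := by
    rw [hu, hco, hsi, Complex.exp_mul_I, ← Complex.ofReal_cos, ← Complex.ofReal_sin]
    ring
  have huu : u * u = Complex.exp ((β : ℝ) * I) := by
    rw [huexp, ← Complex.exp_add]
    congr 1
    push_cast
    ring
  by_cases hd0 : D.coeff 0 = 0
  · -- Case: D(0) = 0, then S(0) ≠ 0, so ρ = 1 and c^B = 1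
    have hs0 : S.coeff 0 ≠ 0 := by
      intro h
      exact hSD 0 (by rw [← coeff_zero_eq_eval_zero, h]) (by rw [← coeff_zero_eq_eval_zero, hd0])
    have hρ1 : ρ = 1 := by
      have h1 := mul_right_cancel₀ hs0 (hScoeff 0)
      rw [← h1, pow_zero]
    have hcB1 : Complex.exp (I * ((B : ℂ) * (α : ℂ))) = 1 := by
      rw [← hcpow B, hρval, hρ1]
    obtain ⟨k, hk⟩ := Complex.exp_eq_one_iff.mp hcB1
    have hkreal : (B : ℝ) * α = k * (2 * π) := by
      have h7 : (I : ℂ) * ((B : ℂ) * (α : ℂ)) = I * ((k : ℂ) * (2 * (π : ℝ))) := by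
        linear_combination hk
      have h8 := mul_left_cancel₀ Complex.I_ne_zero h7
      exact_mod_cast h8
    -- u κ = v, so exp(iβ) c^{deg D} = 1
    have h9 : Complex.exp ((β : ℝ) * I + I * ((D.natDegree : ℂ) * (α : ℂ))) = 1 := by
      rw [Complex.exp_add, ← huu, ← hcpow D.natDegree, hκval]
      calc u * u * κ = (u * κ) * u := by ring
        _ = (v * ρ) * u := by rw [keyscalar]
        _ = (u * v) * ρ := by ring
        _ = 1 := by rw [huv, hρ1, one_mul]
    obtain ⟨m, hm⟩ := Complex.exp_eq_one_iff.mp h9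
    have hmreal : β + (D.natDegree : ℝ) * α = m * (2 * π) := by
      have h7 : (I : ℂ) * ((β : ℂ) + (D.natDegree : ℂ) * (α : ℂ)) = I * ((m : ℂ) * (2 * (π : ℝ))) := by
        linear_combination hm
      have h8 := mul_left_cancel₀ Complex.I_ne_zero h7
      exact_mod_cast h8
    refine ⟨k * B - m * B + (D.natDegree : ℤ) * k, ?_⟩
    push_cast
    linear_combination ((B : ℝ) + (D.natDegree : ℝ)) * hkreal - (B : ℝ) * hmreal
  · -- Case: D(0) ≠ 0, then κ = 1, so u = v c^B, hence exp(iβ) = c^B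
    have hκ1 : κ = 1 := by
      have h1 := mul_right_cancel₀ hd0 (hDcoeff 0)
      rw [← h1, pow_zero]
    have h5 : Complex.exp ((β : ℝ) * I) = Complex.exp (I * ((B : ℂ) * (α : ℂ))) := by
      have h4 : u = v * c ^ B := by rw [hρval, ← keyscalar, hκ1, mul_one]
      calc Complex.exp ((β : ℝ) * I) = u * u := huu.symm
        _ = (v * c ^ B) * u := by rw [← h4]
        _ = (u * v) * c ^ B := by ring
        _ = c ^ B := by rw [huv, one_mul]
        _ = Complex.exp (I * ((B : ℂ) * (α : ℂ))) := hcpow B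
    have h6 : Complex.exp ((β : ℝ) * I - I * ((B : ℂ) * (α : ℂ))) = 1 := by
      rw [Complex.exp_sub, h5, div_self (Complex.exp_ne_zero _)]
    obtain ⟨n, hn⟩ := Complex.exp_eq_one_iff.mp h6
    have hreal : β - (B : ℝ) * α = n * (2 * π) := by
      have h7 : (I : ℂ) * ((β : ℂ) - (B : ℂ) * (α : ℂ)) = I * ((n : ℂ) * (2 * (π : ℝ))) := by
        linear_combination hn
      have h8 := mul_left_cancel₀ Complex.I_ne_zero h7
      exact_mod_cast h8
    refine ⟨-((B : ℤ) * n), ?_⟩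
    push_cast
    linear_combination (-(B : ℝ)) * hreal
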